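/- arXiv:1408.4110 — 2 statements merged into one kernel-verified Lean document; each statement's English description precedes it below -/
import Mathlib

section
/- For every word β in the generators σ_1^{±1}, …, σ_{n−1}^{±1} of B_n, each element φ*_β(a_{i,n+1}) lies in the free left 𝒜_n-submodule of 𝒜_{n+1} with basis a_{1,n+1}, …, a_{n,n+1}, and each φ*_β(a_{n+1,i}) lies in the free right 𝒜_n-submodule with basis a_{n+1,1}, …, a_{n+1,n}, so Φ^L_β and Φ^R_β are well defined; moreover, for any two words β₁, β₂ one has the chain rule Φ^L_{β₁β₂} = φ_{β₁}(Φ^L_{β₂}) · Φ^L_{β₁} and Φ^R_{β₁β₂} = Φ^R_{β₁} · φ_{β₁}(Φ^R_{β₂}), where φ_{β₁} is applied entrywise. -/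
open scoped TensorProduct

/-- Generator index set for the algebra `𝒜ₙ`: pairs `(i,j)` with `1 ≤ i,j ≤ n`, `i ≠ j`. -/
abbrev Idx (n : ℕ) : Type := {q : ℕ × ℕ // q.1 ≠ q.2 ∧ 1 ≤ q.1 ∧ q.1 ≤ n ∧ 1 ≤ q.2 ∧ q.2 ≤ n}

/-- `𝒜ₙ`, the free noncommutative unital `ℤ`-algebra on the generators `a_{ij}`. -/
abbrev FA (n : ℕ) : Type := FreeAlgebra ℤ (Idx n)

/-- The generator `a_{ij}` when the indices are in range (`1 ≤ i,j ≤ n`, `i ≠ j`); `0` otherwise. -/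
noncomputable def gen (n i j : ℕ) : FA n :=
  if h : i ≠ j ∧ 1 ≤ i ∧ i ≤ n ∧ 1 ≤ j ∧ j ≤ n then FreeAlgebra.ι ℤ (⟨(i, j), h⟩ : Idx n) else 0

/-- Image of the generator `a_{ij}` under `φ_{σ_k}`. -/
noncomputable def phiGenImg (n k i j : ℕ) : FA n :=
  if i = k then
    (if j = k + 1 then -gen n (k+1) k
     else gen n (k+1) j - gen n (k+1) k * gen n k j)
  else if i = k + 1 then
    (if j = k then -gen n k (k+1) else gen n k j)
  else
    if j = k then gen n i (k+1) - gen n i k * gen n k (k+1)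
    else if j = k + 1 then gen n i k
    else gen n i j

/-- Image of the generator `a_{ij}` under `φ_{σ_k}⁻¹ = φ_{σ_k⁻¹}`. -/
noncomputable def phiInvGenImg (n k i j : ℕ) : FA n :=
  if i = k + 1 then
    (if j = k then -gen n k (k+1)
     else gen n k j - gen n k (k+1) * gen n (k+1) j)
  else if i = k then
    (if j = k + 1 then -gen n (k+1) k else gen n (k+1) j)
  else
    if j = k + 1 then gen n i k - gen n i (k+1) * gen n (k+1) k
    else if j = k then gen n i (k+1)
    else gen n i j

/-- `φ_{σ_k}` for the letter `(k, true)` and `φ_{σ_k⁻¹}` for the letter `(k, false)`. -/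
noncomputable def phiLetter (n : ℕ) (l : ℕ × Bool) : FA n →ₐ[ℤ] FA n :=
  FreeAlgebra.lift ℤ fun g : Idx n =>
    if l.2 then phiGenImg n l.1 g.val.1 g.val.2 else phiInvGenImg n l.1 g.val.1 g.val.2

/-- `φ_β` for a word `β` in the letters `σ_k^{±1}`, with `φ_{β₁β₂} = φ_{β₁} ∘ φ_{β₂}`. -/
noncomputable def phiWord (n : ℕ) (w : List (ℕ × Bool)) : FA n →ₐ[ℤ] FA n :=
  w.foldr (fun l f => (phiLetter n l).comp f) (AlgHom.id ℤ (FA n))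

/-- `β` is a word in the generators `σ_1^{±1}, …, σ_{n−1}^{±1}` of the braid group `B_n`. -/
def WordIn (n : ℕ) (w : List (ℕ × Bool)) : Prop := ∀ l ∈ w, 1 ≤ l.1 ∧ l.1 + 1 ≤ n

/-- The natural inclusion `𝒜ₙ → 𝒜ₙ₊₁`. -/
noncomputable def incl (n : ℕ) : FA n →ₐ[ℤ] FA (n+1) :=
  FreeAlgebra.lift ℤ fun g : Idx n => gen (n+1) g.val.1 g.val.2

/-- `M` (a matrix recorded as a function `ℕ → ℕ → 𝒜ₙ`, supported on `[1,n] × [1,n]`)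
is the matrix `Φ^L_β`:  `φ*_β(a_{i,n+1}) = ∑_j M_{ij} a_{j,n+1}`. -/
def IsPhiL (n : ℕ) (w : List (ℕ × Bool)) (M : ℕ → ℕ → FA n) : Prop :=
  (∀ i j, i ∉ Finset.Icc 1 n ∨ j ∉ Finset.Icc 1 n → M i j = 0) ∧
  ∀ i ∈ Finset.Icc 1 n,
    phiWord (n+1) w (gen (n+1) i (n+1)) =
      ∑ j ∈ Finset.Icc 1 n, incl n (M i j) * gen (n+1) j (n+1)

/-- `M` is the matrix `Φ^R_β`:  `φ*_β(a_{n+1,i}) = ∑_j a_{n+1,j} M_{ji}`. -/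
def IsPhiR (n : ℕ) (w : List (ℕ × Bool)) (M : ℕ → ℕ → FA n) : Prop :=
  (∀ i j, i ∉ Finset.Icc 1 n ∨ j ∉ Finset.Icc 1 n → M i j = 0) ∧
  ∀ i ∈ Finset.Icc 1 n,
    phiWord (n+1) w (gen (n+1) (n+1) i) =
      ∑ j ∈ Finset.Icc 1 n, gen (n+1) (n+1) j * incl n (M j i)

/-- The permutation (of `ℕ`, via 1-based strand labels) determined by a braid word,
with `perm (w₁ ++ w₂) = perm w₁ * perm w₂`. -/
def permWord (w : List (ℕ × Bool)) : Equiv.Perm ℕ :=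
  w.foldr (fun l f => Equiv.swap l.1 (l.1 + 1) * f) 1

/-- The writhe (exponent sum) of a braid word. -/
def writhe (w : List (ℕ × Bool)) : ℤ :=
  (w.map fun l => if l.2 then (1 : ℤ) else -1).sum

/-- Conjugation, as an algebra map to the opposite algebra. -/
noncomputable def conjHom (n : ℕ) : FA n →ₐ[ℤ] (FA n)ᵐᵒᵖ :=
  FreeAlgebra.lift ℤ fun g : Idx n => MulOpposite.op (gen n g.val.2 g.val.1)

/-- Conjugation `x ↦ x̄`: the `ℤ`-linear anti-automorphism with `a_{ij} ↦ a_{ji}`. -/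
noncomputable def conj (n : ℕ) (x : FA n) : FA n := (conjHom n x).unop

/-- Conjugation as a `ℤ`-linear map. -/
noncomputable def conjLin (n : ℕ) : FA n →ₗ[ℤ] FA n :=
  (MulOpposite.opLinearEquiv ℤ).symm.toLinearMap ∘ₗ (conjHom n).toLinearMap

/-- The word `τ_{a,p} = σ_a σ_{a+1} ⋯ σ_{a+p−1}`. -/
def tauWord (a p : ℕ) : List (ℕ × Bool) := (List.range p).map fun t => (a + t, true)

/-- The word `κ_{a,l} = τ_{a+l−1,p} τ_{a+l−2,p} ⋯ τ_{a,p}`. -/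
def kappaWord (a l p : ℕ) : List (ℕ × Bool) :=
  (((List.range l).reverse).map fun t => tauWord (a + t) p).flatten

/-- The inverse of a braid word. -/
def invWord (w : List (ℕ × Bool)) : List (ℕ × Bool) := w.reverse.map fun l => (l.1, !l.2)

/-- The `p`-cable `α^{(p)}` of a braid word `α` (each strand replaced by `p` parallel strands):
substitute `σ_m ↦ κ_{(m−1)p+1,p}` and `σ_m⁻¹ ↦ κ_{(m−1)p+1,p}⁻¹`. -/
def cable (p : ℕ) (w : List (ℕ × Bool)) : List (ℕ × Bool) :=
  (w.map fun l =>
    if l.2 then kappaWord ((l.1 - 1) * p + 1) p p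
    else invWord (kappaWord ((l.1 - 1) * p + 1) p p)).flatten

/-- The product `a_{x₁x₂} a_{x₂x₃} ⋯ a_{x_{m-1}x_m}` along a list `[x₁, …, x_m]`
(`1` for lists of length `≤ 1`). -/
noncomputable def pathFactors (n : ℕ) : List ℕ → FA n
  | x :: y :: rest => gen n x y * pathFactors n (y :: rest)
  | _ => 1

/-- `A(i,j,X) = Σ_{Y ⊆ X} (−1)^{|Y|} a_{i y₁} a_{y₁ y₂} ⋯ a_{y_k j}` (ascending order on `Y`). -/
noncomputable def Aexp (n i j : ℕ) (X : Finset ℕ) : FA n :=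
  ∑ Y ∈ X.powerset, ((-1 : ℤ) ^ Y.card) • pathFactors n (i :: (Y.sort (· ≤ ·) ++ [j]))

/-- `A'(i,j,X) = Σ_{Y ⊆ X} (−1)^{|Y|} a_{i y_k} a_{y_k y_{k−1}} ⋯ a_{y₁ j}` (descending order). -/
noncomputable def A'exp (n i j : ℕ) (X : Finset ℕ) : FA n :=
  ∑ Y ∈ X.powerset, ((-1 : ℤ) ^ Y.card) • pathFactors n (i :: ((Y.sort (· ≤ ·)).reverse ++ [j]))

/-- `B'(i,j,X) = Σ_{Y ⊆ X, min Y ≠ j} c_Y a_{i y_k} ⋯ a_{y₁ j}`, where `c_Y = (−1)^{|Y|+1}` if all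
elements of `Y` exceed `j` (including `Y = ∅`), and `c_Y = (−1)^{|Y|}` otherwise. -/
noncomputable def B'exp (n i j : ℕ) (X : Finset ℕ) : FA n :=
  ∑ Y ∈ X.powerset.filter (fun Y => Y.min ≠ (j : WithTop ℕ)),
    (if ∀ y ∈ Y, j < y then ((-1 : ℤ) ^ (Y.card + 1)) else ((-1 : ℤ) ^ Y.card)) •
      pathFactors n (i :: ((Y.sort (· ≤ ·)).reverse ++ [j]))

/-- For `i = (q_i − 1)p + r_i` with `1 ≤ r_i ≤ p`: the quotient `q_i`. -/
def qIdx (p i : ℕ) : ℕ := (i - 1) / p + 1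

/-- For `i = (q_i − 1)p + r_i` with `1 ≤ r_i ≤ p`: the remainder `r_i`. -/
def rIdx (p i : ℕ) : ℕ := (i - 1) % p + 1

attribute [local instance high] Algebra.toModule

/-- The homomorphism `ψ : 𝒜_{kp} → 𝒜_k ⊗ 𝒜_p`. -/
noncomputable def psi (k p : ℕ) : FA (k * p) →ₐ[ℤ] FA k ⊗[ℤ] FA p :=
  FreeAlgebra.lift ℤ fun g : Idx (k * p) =>
    if qIdx p g.val.1 = qIdx p g.val.2 then
      (1 : FA k) ⊗ₜ[ℤ] gen p (rIdx p g.val.1) (rIdx p g.val.2)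
    else if rIdx p g.val.1 = rIdx p g.val.2 then
      gen k (qIdx p g.val.1) (qIdx p g.val.2) ⊗ₜ[ℤ] (1 : FA p)
    else if (qIdx p g.val.1 < qIdx p g.val.2 ∧ rIdx p g.val.2 < rIdx p g.val.1) ∨
            (qIdx p g.val.2 < qIdx p g.val.1 ∧ rIdx p g.val.1 < rIdx p g.val.2) then 0
    else gen k (qIdx p g.val.1) (qIdx p g.val.2) ⊗ₜ[ℤ] gen p (rIdx p g.val.1) (rIdx p g.val.2)

/-- `ψ*(x · a_{i,*}) = ψ(x) · (a_{q_i,*} ⊗ a_{r_i,*})`, the image of the element `x · a_{i,*}`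
of `𝒜_{kp}^L` under `ψ* : 𝒜_{kp}^L → 𝒜_k^L ⊗ 𝒜_p^L`, the target realized inside
`𝒜_{k+1} ⊗ 𝒜_{p+1}`. -/
noncomputable def psiStarElt (k p : ℕ) (x : FA (k * p)) (i : ℕ) :
    FA (k+1) ⊗[ℤ] FA (p+1) :=
  (Algebra.TensorProduct.map (incl k) (incl p)) (psi k p x) *
    (gen (k+1) (qIdx p i) (k+1) ⊗ₜ[ℤ] gen (p+1) (rIdx p i) (p+1))

/-- The `(i,j)` entry of `Δ(β) = diag[(−1)^{w(β)}, 1, …, 1]` (1-based indices). -/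
noncomputable def deltaEnt (w : List (ℕ × Bool)) (i j : ℕ) : ℂ :=
  if i = j then (if i = 1 then (-1 : ℂ) ^ writhe w else 1) else 0

/-!
For a word `β` in `B_n`, `φ*_β` restricts to `φ_β` on `𝒜ₙ ⊂ 𝒜ₙ₊₁`. Applying `φ*_{β₁}` to
`φ*_{β₂}(a_{i,n+1}) = ∑ₗ (Φ^L_{β₂})_{il} a_{l,n+1}` therefore gives the chain rule, and existence
follows by induction on the word from the one-letter case, where it can be read off the formulas
for `φ_{σ_k^{±1}}`. For uniqueness, the algebra map `𝒜ₙ₊₁ → M₂(𝒜ₙ)` which is `x ↦ x • 1` on `𝒜ₙ`,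
sends `a_{j,n+1}` and `a_{n+1,j}` to the matrix unit `E₀₁` and the other new generators to `0`,
extracts the `j`-th coefficient of a left or right combination as the `(0,1)` entry.
-/

open Finset

theorem gen_eq_ι {n i j : ℕ} (h : i ≠ j ∧ 1 ≤ i ∧ i ≤ n ∧ 1 ≤ j ∧ j ≤ n) :
    gen n i j = FreeAlgebra.ι ℤ (⟨(i, j), h⟩ : Idx n) :=
  dif_pos h

theorem incl_gen {n i j : ℕ} (hi : i ≤ n) (hj : j ≤ n) : incl n (gen n i j) = gen (n+1) i j := by
  by_cases h : i ≠ j ∧ 1 ≤ i ∧ i ≤ n ∧ 1 ≤ j ∧ j ≤ n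
  · rw [gen_eq_ι h, incl, FreeAlgebra.lift_ι_apply]
  · rw [gen, dif_neg h, map_zero, gen, dif_neg (by omega)]

theorem phiLetter_gen {n i j : ℕ} (k : ℕ) (e : Bool) (h : i ≠ j ∧ 1 ≤ i ∧ i ≤ n ∧ 1 ≤ j ∧ j ≤ n) :
    phiLetter n (k, e) (gen n i j) = if e then phiGenImg n k i j else phiInvGenImg n k i j := by
  rw [gen_eq_ι h, phiLetter, FreeAlgebra.lift_ι_apply]

theorem phiLetter_incl {n k : ℕ} (hk : k + 1 ≤ n) (e : Bool) (x : FA n) :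
    phiLetter (n+1) (k, e) (incl n x) = incl n (phiLetter n (k, e) x) := by
  suffices (phiLetter (n+1) (k, e)).comp (incl n) = (incl n).comp (phiLetter n (k, e)) from
    DFunLike.congr_fun this x
  refine FreeAlgebra.hom_ext (funext fun ⟨⟨i, j⟩, hij⟩ => ?_)
  simp only [Function.comp_apply, AlgHom.comp_apply]
  rw [← gen_eq_ι hij, incl_gen hij.2.2.1 hij.2.2.2.2, phiLetter_gen k e (by omega),
    phiLetter_gen k e hij]
  cases e <;> dsimp only [phiGenImg, phiInvGenImg] <;> split_ifs <;>
    simp (disch := omega) only [map_sub, map_mul, map_neg, incl_gen]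

theorem phiWord_append (n : ℕ) (w₁ w₂ : List (ℕ × Bool)) :
    phiWord n (w₁ ++ w₂) = (phiWord n w₁).comp (phiWord n w₂) := by
  induction w₁ with
  | nil => exact (AlgHom.id_comp _).symm
  | cons l w ih => simp only [List.cons_append, phiWord, List.foldr_cons] at ih ⊢; rw [ih]; rfl

theorem phiWord_incl {n : ℕ} {w : List (ℕ × Bool)} (hw : WordIn n w) (x : FA n) :
    phiWord (n+1) w (incl n x) = incl n (phiWord n w x) := by
  induction w with
  | nil => rfl
  | cons l w ih =>
    obtain ⟨k, e⟩ := l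
    have hw' : WordIn n w := fun l hl => hw l (List.mem_cons_of_mem _ hl)
    change phiLetter (n+1) (k, e) (phiWord (n+1) w (incl n x)) =
      incl n (phiLetter n (k, e) (phiWord n w x))
    rw [ih hw', phiLetter_incl (hw _ List.mem_cons_self).2]

noncomputable def coeffRep (n j : ℕ) : FA (n+1) →ₐ[ℤ] Matrix (Fin 2) (Fin 2) (FA n) :=
  FreeAlgebra.lift ℤ fun g : Idx (n+1) =>
    Matrix.scalar (Fin 2) (gen n g.val.1 g.val.2) +
      if g.val = (j, n+1) ∨ g.val = (n+1, j) then Matrix.single 0 1 1 else 0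

theorem coeffRep_incl (n j : ℕ) (x : FA n) :
    coeffRep n j (incl n x) = Matrix.scalar (Fin 2) x := by
  suffices (coeffRep n j).comp (incl n) = (Matrix.scalar (Fin 2)).toIntAlgHom from
    DFunLike.congr_fun this x
  refine FreeAlgebra.hom_ext (funext fun ⟨⟨i, j'⟩, h⟩ => ?_)
  simp only [Function.comp_apply, AlgHom.comp_apply]
  rw [← gen_eq_ι h, incl_gen h.2.2.1 h.2.2.2.2, gen_eq_ι (by omega), coeffRep,
    FreeAlgebra.lift_ι_apply, if_neg (by simp only [Prod.ext_iff]; omega), add_zero]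
  rfl

theorem coeffRep_gen_col {n j j' : ℕ} (hj' : j' ∈ Icc 1 n) :
    coeffRep n j (gen (n+1) j' (n+1)) = if j' = j then Matrix.single 0 1 1 else 0 := by
  rw [mem_Icc] at hj'
  rw [gen_eq_ι (by omega), coeffRep, FreeAlgebra.lift_ι_apply]
  dsimp only
  rw [gen, dif_neg (by omega), map_zero, zero_add]
  simp only [Prod.ext_iff, and_true]
  split_ifs <;> first | rfl | omega

theorem coeffRep_gen_row {n j j' : ℕ} (hj' : j' ∈ Icc 1 n) :
    coeffRep n j (gen (n+1) (n+1) j') = if j' = j then Matrix.single 0 1 1 else 0 := by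
  rw [mem_Icc] at hj'
  rw [gen_eq_ι (by omega), coeffRep, FreeAlgebra.lift_ι_apply]
  dsimp only
  rw [gen, dif_neg (by omega), map_zero, zero_add]
  simp only [Prod.ext_iff, true_and]
  split_ifs <;> first | rfl | omega

theorem coeffRep_sum_incl_mul_gen {n j : ℕ} (hj : j ∈ Icc 1 n) (c : ℕ → FA n) :
    coeffRep n j (∑ j' ∈ Icc 1 n, incl n (c j') * gen (n+1) j' (n+1)) 0 1 = c j := by
  rw [map_sum, sum_congr rfl fun j' hj' => by rw [map_mul, coeffRep_incl, coeffRep_gen_col hj'],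
    sum_congr rfl fun j' _ => by rw [mul_ite, mul_zero], sum_ite_eq', if_pos hj]
  simp

theorem coeffRep_sum_gen_mul_incl {n j : ℕ} (hj : j ∈ Icc 1 n) (c : ℕ → FA n) :
    coeffRep n j (∑ j' ∈ Icc 1 n, gen (n+1) (n+1) j' * incl n (c j')) 0 1 = c j := by
  rw [map_sum, sum_congr rfl fun j' hj' => by rw [map_mul, coeffRep_incl, coeffRep_gen_row hj'],
    sum_congr rfl fun j' _ => by rw [ite_mul, zero_mul], sum_ite_eq', if_pos hj]
  simp

def InLeftSpan (n : ℕ) (x : FA (n+1)) : Prop :=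
  ∃ c : ℕ → FA n, x = ∑ j ∈ Icc 1 n, incl n (c j) * gen (n+1) j (n+1)

namespace InLeftSpan

variable {n : ℕ} {x y : FA (n+1)}

theorem gen_last {j : ℕ} (hj : j ∈ Icc 1 n) : InLeftSpan n (gen (n+1) j (n+1)) :=
  ⟨fun j' => if j' = j then 1 else 0, by simp [ite_mul, hj]⟩

theorem sub (hx : InLeftSpan n x) (hy : InLeftSpan n y) : InLeftSpan n (x - y) := by
  obtain ⟨c, rfl⟩ := hx
  obtain ⟨d, rfl⟩ := hy
  exact ⟨c - d, by simp only [Pi.sub_apply, map_sub, sub_mul, sum_sub_distrib]⟩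

theorem gen_mul (hx : InLeftSpan n x) {i j : ℕ} (hi : i ≤ n) (hj : j ≤ n) :
    InLeftSpan n (gen (n+1) i j * x) := by
  obtain ⟨c, rfl⟩ := hx
  exact ⟨fun j' => gen n i j * c j', by simp only [mul_sum, map_mul, mul_assoc, incl_gen hi hj]⟩

theorem phiLetter_gen_last {k : ℕ} (hk : 1 ≤ k ∧ k + 1 ≤ n) (e : Bool) {j : ℕ}
    (hj : j ∈ Icc 1 n) : InLeftSpan n (phiLetter (n+1) (k, e) (gen (n+1) j (n+1))) := by
  have hj' := mem_Icc.mp hj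
  rw [phiLetter_gen k e (by omega)]
  cases e <;> dsimp only [phiGenImg, phiInvGenImg] <;> split_ifs <;> first
    | omega
    | exact gen_last (by rw [mem_Icc]; omega)
    | exact (gen_last (by rw [mem_Icc]; omega)).sub
        ((gen_last (by rw [mem_Icc]; omega)).gen_mul (by omega) (by omega))

end InLeftSpan

namespace IsPhiL

variable {n : ℕ} {w w₁ w₂ : List (ℕ × Bool)} {M M' M₁ M₂ : ℕ → ℕ → FA n}

theorem unique (h : IsPhiL n w M) (h' : IsPhiL n w M') : M = M' := by
  funext i j
  by_cases hij : i ∈ Icc 1 n ∧ j ∈ Icc 1 n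
  · rw [← coeffRep_sum_incl_mul_gen hij.2 (M i), ← coeffRep_sum_incl_mul_gen hij.2 (M' i),
      ← h.2 i hij.1, ← h'.2 i hij.1]
  · rw [h.1 i j (not_and_or.mp hij), h'.1 i j (not_and_or.mp hij)]

theorem append (hw₁ : WordIn n w₁) (h₁ : IsPhiL n w₁ M₁) (h₂ : IsPhiL n w₂ M₂) :
    IsPhiL n (w₁ ++ w₂) fun i j => ∑ l ∈ Icc 1 n, phiWord n w₁ (M₂ i l) * M₁ l j := by
  refine ⟨fun i j hij => sum_eq_zero fun l _ => ?_, fun i hi => ?_⟩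
  · rcases hij with hi | hj
    · rw [h₂.1 i l (Or.inl hi), map_zero, zero_mul]
    · rw [h₁.1 l j (Or.inr hj), mul_zero]
  · calc phiWord (n+1) (w₁ ++ w₂) (gen (n+1) i (n+1))
        = ∑ l ∈ Icc 1 n, incl n (phiWord n w₁ (M₂ i l)) * phiWord (n+1) w₁ (gen (n+1) l (n+1)) := by
          rw [phiWord_append, AlgHom.comp_apply, h₂.2 i hi, map_sum]
          simp only [map_mul, phiWord_incl hw₁]
      _ = ∑ l ∈ Icc 1 n, ∑ j ∈ Icc 1 n,
            incl n (phiWord n w₁ (M₂ i l) * M₁ l j) * gen (n+1) j (n+1) :=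
          sum_congr rfl fun l hl => by simp only [h₁.2 l hl, mul_sum, map_mul, mul_assoc]
      _ = _ := by
          rw [sum_comm]
          exact sum_congr rfl fun j _ => by rw [← sum_mul, ← map_sum]

theorem exists_of_inLeftSpan
    (h : ∀ i ∈ Icc 1 n, InLeftSpan n (phiWord (n+1) w (gen (n+1) i (n+1)))) :
    ∃ M, IsPhiL n w M := by
  choose! c hc using h
  refine ⟨fun i j => if i ∈ Icc 1 n ∧ j ∈ Icc 1 n then c i j else 0,
    fun i j hij => if_neg (not_and_or.mpr hij), fun i hi => (hc i hi).trans ?_⟩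
  exact sum_congr rfl fun j hj => by dsimp only; rw [if_pos ⟨hi, hj⟩]

end IsPhiL

theorem exists_isPhiL {n : ℕ} {w : List (ℕ × Bool)} (hw : WordIn n w) : ∃ M, IsPhiL n w M := by
  induction w with
  | nil => exact IsPhiL.exists_of_inLeftSpan fun i hi => InLeftSpan.gen_last hi
  | cons l w ih =>
    obtain ⟨k, e⟩ := l
    have hl : WordIn n [(k, e)] := fun l hl => hw l (by simp_all)
    obtain ⟨M₁, hM₁⟩ := IsPhiL.exists_of_inLeftSpan (w := [(k, e)]) fun i hi =>
      InLeftSpan.phiLetter_gen_last (hw _ List.mem_cons_self) e hi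
    obtain ⟨M₂, hM₂⟩ := ih fun l hl => hw l (List.mem_cons_of_mem _ hl)
    exact ⟨_, hM₁.append hl hM₂⟩

def InRightSpan (n : ℕ) (x : FA (n+1)) : Prop :=
  ∃ c : ℕ → FA n, x = ∑ j ∈ Icc 1 n, gen (n+1) (n+1) j * incl n (c j)

namespace InRightSpan

variable {n : ℕ} {x y : FA (n+1)}

theorem gen_last {j : ℕ} (hj : j ∈ Icc 1 n) : InRightSpan n (gen (n+1) (n+1) j) :=
  ⟨fun j' => if j' = j then 1 else 0, by simp [mul_ite, hj]⟩

theorem sub (hx : InRightSpan n x) (hy : InRightSpan n y) : InRightSpan n (x - y) := by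
  obtain ⟨c, rfl⟩ := hx
  obtain ⟨d, rfl⟩ := hy
  exact ⟨c - d, by simp only [Pi.sub_apply, map_sub, mul_sub, sum_sub_distrib]⟩

theorem mul_gen (hx : InRightSpan n x) {i j : ℕ} (hi : i ≤ n) (hj : j ≤ n) :
    InRightSpan n (x * gen (n+1) i j) := by
  obtain ⟨c, rfl⟩ := hx
  exact ⟨fun j' => c j' * gen n i j, by simp only [sum_mul, map_mul, mul_assoc, incl_gen hi hj]⟩

theorem phiLetter_gen_last {k : ℕ} (hk : 1 ≤ k ∧ k + 1 ≤ n) (e : Bool) {j : ℕ}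
    (hj : j ∈ Icc 1 n) : InRightSpan n (phiLetter (n+1) (k, e) (gen (n+1) (n+1) j)) := by
  have hj' := mem_Icc.mp hj
  rw [phiLetter_gen k e (by omega)]
  cases e <;> dsimp only [phiGenImg, phiInvGenImg] <;> split_ifs <;> first
    | omega
    | exact gen_last (by rw [mem_Icc]; omega)
    | exact (gen_last (by rw [mem_Icc]; omega)).sub
        ((gen_last (by rw [mem_Icc]; omega)).mul_gen (by omega) (by omega))

end InRightSpan

namespace IsPhiR

variable {n : ℕ} {w w₁ w₂ : List (ℕ × Bool)} {M M' M₁ M₂ : ℕ → ℕ → FA n}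

theorem unique (h : IsPhiR n w M) (h' : IsPhiR n w M') : M = M' := by
  funext i j
  by_cases hij : i ∈ Icc 1 n ∧ j ∈ Icc 1 n
  · rw [← coeffRep_sum_gen_mul_incl hij.1 (M · j), ← coeffRep_sum_gen_mul_incl hij.1 (M' · j),
      ← h.2 j hij.2, ← h'.2 j hij.2]
  · rw [h.1 i j (not_and_or.mp hij), h'.1 i j (not_and_or.mp hij)]

theorem append (hw₁ : WordIn n w₁) (h₁ : IsPhiR n w₁ M₁) (h₂ : IsPhiR n w₂ M₂) :
    IsPhiR n (w₁ ++ w₂) fun i j => ∑ l ∈ Icc 1 n, M₁ i l * phiWord n w₁ (M₂ l j) := by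
  refine ⟨fun i j hij => sum_eq_zero fun l _ => ?_, fun j hj => ?_⟩
  · rcases hij with hi | hj
    · rw [h₁.1 i l (Or.inl hi), zero_mul]
    · rw [h₂.1 l j (Or.inr hj), map_zero, mul_zero]
  · calc phiWord (n+1) (w₁ ++ w₂) (gen (n+1) (n+1) j)
        = ∑ l ∈ Icc 1 n, phiWord (n+1) w₁ (gen (n+1) (n+1) l) * incl n (phiWord n w₁ (M₂ l j)) := by
          rw [phiWord_append, AlgHom.comp_apply, h₂.2 j hj, map_sum]
          simp only [map_mul, phiWord_incl hw₁]
      _ = ∑ l ∈ Icc 1 n, ∑ i ∈ Icc 1 n,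
            gen (n+1) (n+1) i * incl n (M₁ i l * phiWord n w₁ (M₂ l j)) :=
          sum_congr rfl fun l hl => by simp only [h₁.2 l hl, sum_mul, map_mul, mul_assoc]
      _ = _ := by
          rw [sum_comm]
          exact sum_congr rfl fun i _ => by rw [← mul_sum, ← map_sum]

theorem exists_of_inRightSpan
    (h : ∀ i ∈ Icc 1 n, InRightSpan n (phiWord (n+1) w (gen (n+1) (n+1) i))) :
    ∃ M, IsPhiR n w M := by
  choose! c hc using h
  refine ⟨fun j i => if i ∈ Icc 1 n ∧ j ∈ Icc 1 n then c i j else 0,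
    fun j i hij => if_neg (not_and_or.mpr hij.symm), fun i hi => (hc i hi).trans ?_⟩
  exact sum_congr rfl fun j hj => by dsimp only; rw [if_pos ⟨hi, hj⟩]

end IsPhiR

theorem exists_isPhiR {n : ℕ} {w : List (ℕ × Bool)} (hw : WordIn n w) : ∃ M, IsPhiR n w M := by
  induction w with
  | nil => exact IsPhiR.exists_of_inRightSpan fun i hi => InRightSpan.gen_last hi
  | cons l w ih =>
    obtain ⟨k, e⟩ := l
    have hl : WordIn n [(k, e)] := fun l hl => hw l (by simp_all)
    obtain ⟨M₁, hM₁⟩ := IsPhiR.exists_of_inRightSpan (w := [(k, e)]) fun i hi =>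
      InRightSpan.phiLetter_gen_last (hw _ List.mem_cons_self) e hi
    obtain ⟨M₂, hM₂⟩ := ih fun l hl => hw l (List.mem_cons_of_mem _ hl)
    exact ⟨_, hM₁.append hl hM₂⟩

/-- For every word `β` in the generators of `B_n`, `φ*_β(a_{i,n+1})` lies in the
free left `𝒜ₙ`-module with basis `a_{1,n+1}, …, a_{n,n+1}` and `φ*_β(a_{n+1,i})` in the free right
`𝒜ₙ`-module with basis `a_{n+1,1}, …, a_{n+1,n}`, so `Φ^L_β`, `Φ^R_β` are well defined (exist and
are unique); moreover the chain rule holds: `Φ^L_{β₁β₂} = φ_{β₁}(Φ^L_{β₂})·Φ^L_{β₁}` and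
`Φ^R_{β₁β₂} = Φ^R_{β₁}·φ_{β₁}(Φ^R_{β₂})`. -/
theorem PhiL_PhiR_well_defined_and_chain_rule (n : ℕ) :
    (∀ w : List (ℕ × Bool), WordIn n w →
      (∃! M : ℕ → ℕ → FA n, IsPhiL n w M) ∧ (∃! M : ℕ → ℕ → FA n, IsPhiR n w M)) ∧
    (∀ w₁ w₂ : List (ℕ × Bool), WordIn n w₁ → WordIn n w₂ →
      ∀ M₁ M₂ M₁₂ : ℕ → ℕ → FA n,
        IsPhiL n w₁ M₁ → IsPhiL n w₂ M₂ → IsPhiL n (w₁ ++ w₂) M₁₂ →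
        ∀ i j, M₁₂ i j = ∑ l ∈ Finset.Icc 1 n, phiWord n w₁ (M₂ i l) * M₁ l j) ∧
    (∀ w₁ w₂ : List (ℕ × Bool), WordIn n w₁ → WordIn n w₂ →
      ∀ M₁ M₂ M₁₂ : ℕ → ℕ → FA n,
        IsPhiR n w₁ M₁ → IsPhiR n w₂ M₂ → IsPhiR n (w₁ ++ w₂) M₁₂ →
        ∀ i j, M₁₂ i j = ∑ l ∈ Finset.Icc 1 n, M₁ i l * phiWord n w₁ (M₂ l j)) := by
  refine ⟨fun w hw => ⟨?_, ?_⟩, ?_, ?_⟩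
  · obtain ⟨M, hM⟩ := exists_isPhiL hw
    exact ⟨M, hM, fun _ h => h.unique hM⟩
  · obtain ⟨M, hM⟩ := exists_isPhiR hw
    exact ⟨M, hM, fun _ h => h.unique hM⟩
  · intro w₁ w₂ hw₁ _ M₁ M₂ M₁₂ h₁ h₂ h₁₂ i j
    rw [h₁₂.unique (h₁.append hw₁ h₂)]
  · intro w₁ w₂ hw₁ _ M₁ M₂ M₁₂ h₁ h₂ h₁₂ i j
    rw [h₁₂.unique (h₁.append hw₁ h₂)]
end

section
/- Let N ≥ m + p and let τ_{m,p} = σ_m σ_{m+1} ⋯ σ_{m+p−1} be a word in the generators of B_N. Then for all 1 ≤ i < j ≤ N, φ_{τ_{m,p}}(a_{ij}) equals: a_{i+1,j+1} if m ≤ i < j < m+p; −a_{i+1,m} if m ≤ i < j = m+p; a_{mj} if m+p = i < j; a_{im} if i < m and j = m+p; a_{i,j+1} − a_{im} a_{m,j+1} if i < m ≤ j < m+p; a_{i+1,j} − a_{i+1,m} a_{mj} if m ≤ i < m+p < j; and a_{ij} otherwise. -/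
open scoped TensorProduct

attribute [local instance 2000] Algebra.toModule

/-! Since `τ_{m,p+1} = σ_m τ_{m+1,p}`, induction on `p` reduces the formula to applying the
defining formulas of `φ_{σ_m}` to the formula for `τ_{m+1,p}`; the inductive step is a finite case
check on the position of `i` and `j` relative to `m`, `m + 1` and `m + p + 1`. -/

lemma phiLetter_true_gen {n i j : ℕ} (k : ℕ) (hij : i ≠ j) (hi : 1 ≤ i) (hin : i ≤ n)
    (hj : 1 ≤ j) (hjn : j ≤ n) :
    phiLetter n (k, true) (gen n i j) = phiGenImg n k i j := by
  simp [gen, hij, hi, hin, hj, hjn, phiLetter]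

lemma phiWord_cons (n : ℕ) (l : ℕ × Bool) (w : List (ℕ × Bool)) :
    phiWord n (l :: w) = (phiLetter n l).comp (phiWord n w) :=
  rfl

lemma tauWord_succ (m p : ℕ) : tauWord m (p + 1) = (m, true) :: tauWord (m + 1) p := by
  simp only [tauWord, List.range_succ_eq_map, List.map_cons, List.map_map]
  congr 1
  exact List.map_congr_left fun t _ => by simp [Nat.add_comm, Nat.add_left_comm]

noncomputable def tauGenImg (N m p i j : ℕ) : FA N :=
  if m ≤ i ∧ j < m + p then gen N (i+1) (j+1)
  else if m ≤ i ∧ j = m + p then -gen N (i+1) m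
  else if i = m + p then gen N m j
  else if i < m ∧ j = m + p then gen N i m
  else if i < m ∧ m ≤ j ∧ j < m + p then gen N i (j+1) - gen N i m * gen N m (j+1)
  else if m ≤ i ∧ i < m + p ∧ m + p < j then gen N (i+1) j - gen N (i+1) m * gen N m j
  else gen N i j

lemma tauGenImg_zero (N m : ℕ) {i j : ℕ} (hij : i < j) : tauGenImg N m 0 i j = gen N i j := by
  simp only [tauGenImg, Nat.add_zero]
  split_ifs <;> first | (exfalso; omega) | (congr 1 <;> omega)

set_option maxHeartbeats 600000 in
lemma phiLetter_tauGenImg {N m p i j : ℕ} (hm : 1 ≤ m) (hN : m + (p + 1) ≤ N) (hi : 1 ≤ i)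
    (hij : i < j) (hjN : j ≤ N) :
    phiLetter N (m, true) (tauGenImg N (m + 1) p i j) = tauGenImg N m (p + 1) i j := by
  unfold tauGenImg
  split_ifs <;>
    simp (disch := omega) only [map_sub, map_mul, map_neg, phiLetter_true_gen, phiGenImg] <;>
    split_ifs <;> first | (exfalso; omega) | (subst_vars; rfl) | (subst_vars; noncomm_ring)

theorem phiWord_tauWord_gen {N m i j : ℕ} (p : ℕ) (hm : 1 ≤ m) (hN : m + p ≤ N) (hi : 1 ≤ i)
    (hij : i < j) (hjN : j ≤ N) : phiWord N (tauWord m p) (gen N i j) = tauGenImg N m p i j := by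
  induction p generalizing m with
  | zero => exact (tauGenImg_zero N m hij).symm
  | succ p ih =>
    rw [tauWord_succ, phiWord_cons, AlgHom.comp_apply, ih (by omega) (by omega),
      phiLetter_tauGenImg hm hN hi hij hjN]

theorem phi_tau_formula_general (N m p : ℕ) (hm : 1 ≤ m) (hN : m + p ≤ N)
    (i j : ℕ) (h1 : 1 ≤ i) (hij : i < j) (hjN : j ≤ N) :
    phiWord N (tauWord m p) (gen N i j) =
      if m ≤ i ∧ j < m + p then gen N (i+1) (j+1)
      else if m ≤ i ∧ j = m + p then -gen N (i+1) m
      else if i = m + p then gen N m j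
      else if i < m ∧ j = m + p then gen N i m
      else if i < m ∧ m ≤ j ∧ j < m + p then gen N i (j+1) - gen N i m * gen N m (j+1)
      else if m ≤ i ∧ i < m + p ∧ m + p < j then gen N (i+1) j - gen N (i+1) m * gen N m j
      else gen N i j :=
  phiWord_tauWord_gen p hm hN h1 hij hjN

/-- The action of `φ_{τ_{m,p}}` on the generators `a_{ij}`, `i < j`. -/
theorem phi_tau_formula (N m p : ℕ) (hm : 1 ≤ m) (hp : 1 ≤ p) (hN : m + p ≤ N)
    (i j : ℕ) (h1 : 1 ≤ i) (hij : i < j) (hjN : j ≤ N) :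
    phiWord N (tauWord m p) (gen N i j) =
      if m ≤ i ∧ j < m + p then gen N (i+1) (j+1)
      else if m ≤ i ∧ j = m + p then -gen N (i+1) m
      else if i = m + p then gen N m j
      else if i < m ∧ j = m + p then gen N i m
      else if i < m ∧ m ≤ j ∧ j < m + p then gen N i (j+1) - gen N i m * gen N m (j+1)
      else if m ≤ i ∧ i < m + p ∧ m + p < j then gen N (i+1) j - gen N (i+1) m * gen N m j
      else gen N i j :=
  phi_tau_formula_general N m p hm hN i j h1 hij hjN
end
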